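/- arXiv:1408.0211 — 5 statements merged into one kernel-verified Lean document; each statement's English description precedes it below -/
import Mathlib

section
/- Let (M,d) be a finite metric space, b ∈ M a basepoint, and F ⊆ M a subset such that for all x,y ∈ M there exist A,B ∈ F with d(A,B) = d(A,x) + d(x,y) + d(y,B). Then the map g : M → ℓ∞(F) defined by g(x)(β) = d(x,β) − d(b,β) is an isometric embedding with g(b) = 0. -/
/-! The basepoint terms cancel in `g x - g y`, whose coordinates `d(x, β) - d(y, β)` are
bounded by `d(x, y)` by the triangle inequality. Equality is attained at `β = A`: a subpath of the
geodesic `A — x — y — B` is again geodesic, so `d(A, y) = d(A, x) + d(x, y)`. -/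

section

variable {M : Type*} [MetricSpace M]

lemma dist_eq_add_of_dist_eq_add_add {A x y B : M}
    (h : dist A B = dist A x + dist x y + dist y B) : dist A y = dist A x + dist x y := by
  linarith [dist_triangle A y B, dist_triangle A x y]

section DistanceProfile

variable {ι : Type*} [Fintype ι] (f : ι → M)

lemma pi_norm_dist_sub_dist_le (x y : M) : ‖fun i => dist x (f i) - dist y (f i)‖ ≤ dist x y :=
  (pi_norm_le_iff_of_nonneg dist_nonneg).2 fun i => abs_dist_sub_le x y (f i)

lemma pi_norm_dist_sub_dist_eq {x y : M} {i : ι} (hi : dist (f i) y = dist (f i) x + dist x y) :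
    ‖fun i => dist x (f i) - dist y (f i)‖ = dist x y := by
  refine le_antisymm (pi_norm_dist_sub_dist_le f x y) ?_
  have hcoord : dist x (f i) - dist y (f i) = -dist x y := by
    rw [dist_comm x, dist_comm y]
    linarith
  calc dist x y = ‖dist x (f i) - dist y (f i)‖ := by
        rw [hcoord, norm_neg, Real.norm_of_nonneg dist_nonneg]
    _ ≤ ‖fun i => dist x (f i) - dist y (f i)‖ :=
        norm_le_pi_norm (fun j => dist x (f j) - dist y (f j)) i

end DistanceProfile

end

theorem stmt0_general (M : Type*) [MetricSpace M] (b : M) (F : Finset M)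
    (hF : ∀ x y : M, ∃ A ∈ F, ∃ B ∈ F, dist A B = dist A x + dist x y + dist y B) :
    let g : M → (F → ℝ) := fun x β => dist x (β : M) - dist b (β : M)
    (∀ x y : M, ‖g x - g y‖ = dist x y) ∧ g b = 0 := by
  intro g
  refine ⟨fun x y => ?_, funext fun β => sub_self _⟩
  obtain ⟨A, hA, B, -, hAB⟩ := hF x y
  have hg : g x - g y = fun β : F => dist x (β : M) - dist y (β : M) :=
    funext fun β => sub_sub_sub_cancel_right _ _ _
  rw [hg]
  exact pi_norm_dist_sub_dist_eq Subtype.val (i := ⟨A, hA⟩) (dist_eq_add_of_dist_eq_add_add hAB)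

/-- On a finite metric space with a basepoint `b` and a subset `F` such that any
pair `x, y` lies on a geodesic between two points of `F`, the map
`g x = (dist x β - dist b β)_{β ∈ F}` is an isometric embedding into `ℓ∞(F)` with `g b = 0`. -/
theorem stmt0 (M : Type*) [MetricSpace M] [Fintype M] (b : M) (F : Finset M)
    (hF : ∀ x y : M, ∃ A ∈ F, ∃ B ∈ F, dist A B = dist A x + dist x y + dist y B) :
    let g : M → (F → ℝ) := fun x β => dist x (β : M) - dist b (β : M)
    (∀ x y : M, ‖g x - g y‖ = dist x y) ∧ g b = 0 :=
  stmt0_general M b F hF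
end

section
/- Define the derivation T' of a tree T on ℕ by: (n₁,…,n_h) ∈ T' iff (n₁,…,n_{h−1},k) is not maximal in T for some k ∈ ℕ. Define transfinite iterates T^{(0)} = T, T^{(α+1)} = (T^{(α)})', T^{(α)} = ⋂_{β<α} T^{(β)} for limit α, and the index o(T) = inf{α : T^{(α)} = ∅}. Then for every countable ordinal α, the tree T_{α+1} satisfies o(T_{α+1}) = α + 1. -/
/-!
Grafting a family of trees `C n` below the roots `n` commutes with derivation as long as some
branch is still nonempty, so the iterates of `T_{α+1}` are computed branchwise. By induction on
`α`, the `α`-th iterate of `T_{α+1}` is exactly the set of one-term sequences: every branch of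
`T_{α+1}` has been derived away by stage `α` (at a limit this uses `αₙ + 1 ≤ α`), while below `α`
some branch survives (at a limit this uses `sup αₙ = α`). One more derivation gives `∅`.
-/

/-- `paperTree seq hseq α` is the tree `T_{α+1}` on ℕ (as a set of finite nonempty sequences):
`T₁ = ℕ`, `T_{α+2} = ℕ ∪ ⋃ₙ n⌢T_{α+1}`, and for limit `α`, `T_{α+1} = ℕ ∪ ⋃ₙ n⌢T_{αₙ+1}`
where `αₙ = seq α n` is the fixed sequence chosen for `α`. -/
noncomputable def paperTree (seq : Ordinal → ℕ → Ordinal)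
    (hseq : ∀ α : Ordinal, Order.IsSuccLimit α → ∀ n : ℕ, seq α n < α) : Ordinal → Set (List ℕ) :=
  fun α => Ordinal.limitRecOn α
    {l | ∃ n : ℕ, l = [n]}
    (fun _ ih => {l | ∃ n : ℕ, l = [n]} ∪ ⋃ n : ℕ, (fun s => n :: s) '' ih)
    (fun o ho ih =>
      {l | ∃ n : ℕ, l = [n]} ∪ ⋃ n : ℕ, (fun s => n :: s) '' ih (seq o n) (hseq o ho n))

/-- A node is maximal in `S` if it belongs to `S` and no proper extension of it lies in `S`
(extension = the node is a prefix of it). -/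
def isMaxNode (S : Set (List ℕ)) (s : List ℕ) : Prop :=
  s ∈ S ∧ ∀ t ∈ S, s <+: t → t = s

/-- The derivation of a tree on ℕ: `(n₁,…,n_h) ∈ T'` iff it is in `T` and, for some `k`,
the sibling `(n₁,…,n_{h−1},k)` is not maximal in `T`. -/
def treeDeriv (S : Set (List ℕ)) : Set (List ℕ) :=
  {l ∈ S | ∃ k : ℕ, ¬ isMaxNode S (l.dropLast ++ [k])}

/-- Transfinite iterates `T^{(β)}` of the derivation, with intersections at limit stages. -/
noncomputable def treeDerivIter (S : Set (List ℕ)) : Ordinal → Set (List ℕ) :=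
  fun α => Ordinal.limitRecOn α S (fun _ ih => treeDeriv ih)
    (fun o _ ih => ⋂ β : Set.Iio o, ih β.1 β.2)

open Set

namespace TreeIndex

def singletons : Set (List ℕ) := {l | ∃ n : ℕ, l = [n]}

/-- `ℕ ∪ ⋃ₙ n⌢C n`, the shape of `paperTree` at successor and limit stages. -/
def cone (C : ℕ → Set (List ℕ)) : Set (List ℕ) :=
  singletons ∪ ⋃ n : ℕ, (fun s => n :: s) '' C n

lemma nil_notMem_cone (C : ℕ → Set (List ℕ)) : [] ∉ cone C := by
  simp [cone, singletons]

lemma singleton_mem_cone (C : ℕ → Set (List ℕ)) (n : ℕ) : [n] ∈ cone C :=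
  Or.inl ⟨n, rfl⟩

lemma cons_mem_cone_iff {C : ℕ → Set (List ℕ)} {n : ℕ} {s : List ℕ} (hs : s ≠ []) :
    n :: s ∈ cone C ↔ s ∈ C n := by
  simp [cone, singletons, hs]

lemma cone_const_empty : cone (fun _ => ∅) = singletons := by
  simp [cone]

lemma iInter_cone {ι : Sort*} [Nonempty ι] (F : ι → ℕ → Set (List ℕ)) :
    ⋂ i, cone (F i) = cone (fun n => ⋂ i, F i n) := by
  ext (_ | ⟨n, s⟩)
  · simp [nil_notMem_cone]
  · rcases eq_or_ne s [] with rfl | hs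
    · simp [singleton_mem_cone]
    · simp [cons_mem_cone_iff hs]

lemma isMaxNode_cons_cone_iff {C : ℕ → Set (List ℕ)} {n : ℕ} {s : List ℕ} (hs : s ≠ []) :
    isMaxNode (cone C) (n :: s) ↔ isMaxNode (C n) s := by
  refine and_congr (cons_mem_cone_iff hs) ⟨fun hmax u hu hsu => ?_, fun hmax t ht hst => ?_⟩
  · simpa using hmax (n :: u) ((cons_mem_cone_iff (hsu.ne_nil hs)).2 hu)
      (List.cons_prefix_cons.2 ⟨rfl, hsu⟩)
  · obtain ⟨r, rfl⟩ := hst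
    have hsr : s ++ r ≠ [] := by simp [hs]
    simp [hmax (s ++ r) ((cons_mem_cone_iff hsr).1 ht) ⟨r, rfl⟩]

lemma not_isMaxNode_singleton_cone {C : ℕ → Set (List ℕ)} {k : ℕ} {s : List ℕ} (hs : s ≠ [])
    (hsk : s ∈ C k) : ¬ isMaxNode (cone C) [k] := fun hmax => by
  simpa [hs] using hmax.2 (k :: s) ((cons_mem_cone_iff hs).2 hsk) (List.cons_prefix_cons.2 ⟨rfl, List.nil_prefix⟩)

lemma treeDeriv_singletons : treeDeriv singletons = ∅ := by
  refine eq_empty_of_forall_notMem ?_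
  rintro _ ⟨⟨n, rfl⟩, k, hk⟩
  refine hk ⟨⟨k, rfl⟩, ?_⟩
  rintro _ ⟨m, rfl⟩ hpre
  simpa using (hpre.eq_of_length rfl).symm

lemma treeDeriv_cone (C : ℕ → Set (List ℕ)) (hC : ∃ k, ∃ s ∈ C k, s ≠ []) :
    treeDeriv (cone C) = cone (fun n => treeDeriv (C n)) := by
  ext (_ | ⟨n, s⟩)
  · simp [treeDeriv, nil_notMem_cone]
  · rcases eq_or_ne s [] with rfl | hs
    · obtain ⟨k, s, hsk, hs⟩ := hC
      simpa [singleton_mem_cone, treeDeriv] using ⟨k, not_isMaxNode_singleton_cone hs hsk⟩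
    · have hdrop (k : ℕ) : (n :: s).dropLast ++ [k] = n :: (s.dropLast ++ [k]) := by
        simp [List.dropLast_cons_of_ne_nil hs]
      simp only [treeDeriv, mem_ofPred_eq, cons_mem_cone_iff hs, hdrop,
        isMaxNode_cons_cone_iff (List.concat_ne_nil _ _)]

section Unfolding

variable (seq : Ordinal → ℕ → Ordinal)
  (hseq : ∀ α : Ordinal, Order.IsSuccLimit α → ∀ n : ℕ, seq α n < α)

lemma paperTree_zero : paperTree seq hseq 0 = singletons :=
  Ordinal.limitRecOn_zero _ _ _

lemma paperTree_add_one (α : Ordinal) :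
    paperTree seq hseq (α + 1) = cone (fun _ => paperTree seq hseq α) :=
  Ordinal.limitRecOn_add_one _ _ _ _

lemma paperTree_of_isSuccLimit {α : Ordinal} (hα : Order.IsSuccLimit α) :
    paperTree seq hseq α = cone (fun n => paperTree seq hseq (seq α n)) :=
  Ordinal.limitRecOn_limit _ _ _ _ hα

variable (S : Set (List ℕ))

lemma treeDerivIter_zero : treeDerivIter S 0 = S :=
  Ordinal.limitRecOn_zero _ _ _

lemma treeDerivIter_add_one (β : Ordinal) :
    treeDerivIter S (β + 1) = treeDeriv (treeDerivIter S β) :=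
  Ordinal.limitRecOn_add_one _ _ _ _

lemma treeDerivIter_of_isSuccLimit {β : Ordinal} (hβ : Order.IsSuccLimit β) :
    treeDerivIter S β = ⋂ γ : Iio β, treeDerivIter S γ :=
  Ordinal.limitRecOn_limit _ _ _ _ hβ

end Unfolding

lemma treeDerivIter_antitone (S : Set (List ℕ)) : Antitone (treeDerivIter S) := by
  intro β γ hβγ
  induction γ using Ordinal.limitRecOn with
  | zero => rw [nonpos_iff_eq_zero.1 hβγ]
  | add_one γ ih =>
    rcases Order.le_succ_iff_eq_or_le.1 hβγ with rfl | hβγ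
    · rfl
    · rw [treeDerivIter_add_one]
      exact (sep_subset _ _).trans (ih hβγ)
  | limit γ hγ ih =>
    rcases hβγ.eq_or_lt with rfl | hβγ
    · rfl
    · rw [treeDerivIter_of_isSuccLimit S hγ]
      exact iInter_subset (fun δ : Iio γ => treeDerivIter S δ) ⟨β, hβγ⟩

lemma treeDerivIter_cone (C : ℕ → Set (List ℕ)) {β : Ordinal}
    (hC : ∀ γ < β, ∃ k, ∃ s ∈ treeDerivIter (C k) γ, s ≠ []) :
    treeDerivIter (cone C) β = cone (fun n => treeDerivIter (C n) β) := by
  induction β using Ordinal.limitRecOn with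
  | zero => simp only [treeDerivIter_zero]
  | add_one β ih =>
    rw [treeDerivIter_add_one, ih fun γ hγ => hC γ (hγ.trans (lt_add_one β)),
      treeDeriv_cone _ (hC β (lt_add_one β))]
    simp only [treeDerivIter_add_one]
  | limit β hβ ih =>
    have : Nonempty (Iio β) := ⟨⟨0, hβ.bot_lt⟩⟩
    rw [treeDerivIter_of_isSuccLimit _ hβ,
      iInter_congr fun γ : Iio β => ih γ γ.2 fun δ hδ => hC δ (hδ.trans γ.2), iInter_cone]
    simp only [treeDerivIter_of_isSuccLimit _ hβ]

section Index

variable {S : Set (List ℕ)} {α : Ordinal}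

lemma singleton_mem_treeDerivIter_of_le (hS : treeDerivIter S α = singletons) {β : Ordinal}
    (hβ : β ≤ α) (n : ℕ) : [n] ∈ treeDerivIter S β :=
  treeDerivIter_antitone S hβ (hS ▸ ⟨n, rfl⟩)

lemma treeDerivIter_add_one_eq_empty (hS : treeDerivIter S α = singletons) :
    treeDerivIter S (α + 1) = ∅ := by
  rw [treeDerivIter_add_one, hS, treeDeriv_singletons]

lemma sInf_treeDerivIter_eq_empty (hS : treeDerivIter S α = singletons) :
    sInf {β : Ordinal | treeDerivIter S β = ∅} = α + 1 := by
  refine IsLeast.csInf_eq ⟨treeDerivIter_add_one_eq_empty hS, fun β hβ => ?_⟩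
  by_contra! hlt
  exact eq_empty_iff_forall_notMem.1 hβ _
    (singleton_mem_treeDerivIter_of_le hS (Order.lt_add_one_iff.1 hlt) 0)

end Index

lemma treeDerivIter_paperTree_self (seq : Ordinal → ℕ → Ordinal)
    (hseq : ∀ α : Ordinal, Order.IsSuccLimit α → ∀ n : ℕ, seq α n < α)
    (hsup : ∀ α : Ordinal, Order.IsSuccLimit α → α.card ≤ Cardinal.aleph0 →
      (⨆ n : ℕ, seq α n) = α)
    {α : Ordinal} (hα : α.card ≤ Cardinal.aleph0) :
    treeDerivIter (paperTree seq hseq α) α = singletons := by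
  induction α using Ordinal.limitRecOn with
  | zero => rw [treeDerivIter_zero, paperTree_zero]
  | add_one γ ih =>
    have ihγ := ih ((Ordinal.card_le_card (Order.le_succ γ)).trans hα)
    rw [paperTree_add_one, treeDerivIter_cone, treeDerivIter_add_one_eq_empty ihγ,
      cone_const_empty]
    exact fun δ hδ => ⟨0, [0], singleton_mem_treeDerivIter_of_le ihγ
      (Order.lt_add_one_iff.1 hδ) 0, List.cons_ne_nil _ _⟩
  | limit o ho ih =>
    have ihn (n : ℕ) := ih (seq o n) (hseq o ho n)
      ((Ordinal.card_le_card (hseq o ho n).le).trans hα)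
    have hbranch_empty (n : ℕ) : treeDerivIter (paperTree seq hseq (seq o n)) o = ∅ :=
      subset_empty_iff.1 <| (treeDerivIter_add_one_eq_empty (ihn n)) ▸
        treeDerivIter_antitone _ (Order.add_one_le_iff.2 (hseq o ho n))
    rw [paperTree_of_isSuccLimit seq hseq ho, treeDerivIter_cone, funext hbranch_empty,
      cone_const_empty]
    intro δ hδ
    obtain ⟨n, hn⟩ := Ordinal.lt_iSup_iff.1 ((hsup o ho hα).symm ▸ hδ)
    exact ⟨n, [0], singleton_mem_treeDerivIter_of_le (ihn n) hn.le 0, List.cons_ne_nil _ _⟩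

end TreeIndex

open TreeIndex in
theorem stmt5_general (seq : Ordinal → ℕ → Ordinal)
    (hseq : ∀ α : Ordinal, Order.IsSuccLimit α → ∀ n : ℕ, seq α n < α)
    (hsup : ∀ α : Ordinal, Order.IsSuccLimit α → α.card ≤ Cardinal.aleph0 → (⨆ n : ℕ, seq α n) = α)
    (α : Ordinal) (hα : α.card ≤ Cardinal.aleph0) :
    sInf {β : Ordinal | treeDerivIter (paperTree seq hseq α) β = ∅} = α + 1 :=
  sInf_treeDerivIter_eq_empty (treeDerivIter_paperTree_self seq hseq hsup hα)

/-- the index `o(T) = inf {β : T^{(β)} = ∅}` of the tree `T_{α+1}` equals `α + 1`,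
for every countable ordinal α. -/
theorem stmt5 (seq : Ordinal → ℕ → Ordinal)
    (hseq : ∀ α : Ordinal, Order.IsSuccLimit α → ∀ n : ℕ, seq α n < α)
    (hmono : ∀ α : Ordinal, Order.IsSuccLimit α → α.card ≤ Cardinal.aleph0 → StrictMono (seq α))
    (hsup : ∀ α : Ordinal, Order.IsSuccLimit α → α.card ≤ Cardinal.aleph0 → (⨆ n : ℕ, seq α n) = α)
    (α : Ordinal) (hα : α.card ≤ Cardinal.aleph0) :
    sInf {β : Ordinal | treeDerivIter (paperTree seq hseq α) β = ∅} = α + 1 :=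
  stmt5_general seq hseq hsup α hα
end

section
/- Let M be a metric space with d(x,y) ≥ 1 for all distinct x,y ∈ M, let X, Y be Banach spaces, let 𝒩 ⊆ X be an (a,b)-net, let π : X → 𝒩 satisfy ‖x − π(x)‖ ≤ b for all x ∈ X, and let g : M → X be an isometric embedding. Then for every λ > 2b, the map x ↦ π(λ·g(x)) from (M, λd) to 𝒩 is a Lipschitz embedding with distortion at most (1 + 2b/λ)(1 + 2b/(λ−2b)). -/
/-! A map moving every point by at most `b` distorts distances additively, by at most `2b`.
After scaling a `1`-separated space by `λ`, nonzero distances are at least `λ`, so the additive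
error `2b` becomes the multiplicative error `1 ± 2b/λ`. -/

lemma abs_dist_sub_dist_le_of_forall_dist_le {E : Type*} [PseudoMetricSpace E] {p : E → E}
    {b : ℝ} (hp : ∀ u, dist u (p u) ≤ b) (u v : E) :
    |dist (p u) (p v) - dist u v| ≤ 2 * b := by
  have h := dist_dist_dist_le (p u) (p v) u v
  rw [Real.dist_eq, dist_comm (p u) u, dist_comm (p v) v] at h
  linarith [hp u, hp v]

lemma dist_bounds_of_abs_dist_sub_mul_le {M E : Type*} [PseudoMetricSpace M]
    [PseudoMetricSpace E] (hsep : ∀ x y : M, x ≠ y → 1 ≤ dist x y) {F : M → E} {t c : ℝ}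
    (ht : 0 < t) (hF : ∀ x y, |dist (F x) (F y) - t * dist x y| ≤ c) (x y : M) :
    (1 - c / t) * (t * dist x y) ≤ dist (F x) (F y) ∧
      dist (F x) (F y) ≤ (1 + c / t) * (t * dist x y) := by
  rcases eq_or_ne x y with rfl | hxy
  · simp
  have hc : c ≤ c * dist x y :=
    le_mul_of_one_le_right ((abs_nonneg _).trans (hF x x)) (hsep x y hxy)
  have hscale : c / t * (t * dist x y) = c * dist x y := by field_simp
  obtain ⟨hlow, hupp⟩ := abs_le.1 (hF x y)
  constructor <;> linarith [sub_mul 1 (c / t) (t * dist x y), add_mul 1 (c / t) (t * dist x y)]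

lemma one_add_div_div_one_sub_div {c t : ℝ} (ht : 0 < t) (hct : c < t) :
    (1 + c / t) / (1 - c / t) = (1 + c / t) * (1 + c / (t - c)) := by
  have : t - c ≠ 0 := (sub_pos.2 hct).ne'
  field_simp
  ring

theorem stmt15_general (M : Type*) [MetricSpace M]
    (hsep : ∀ x y : M, x ≠ y → 1 ≤ dist x y)
    (X : Type*) [NormedAddCommGroup X] [NormedSpace ℝ X]
    (b : ℝ)
    (π : X → X) (hπ : ∀ x : X, ‖x - π x‖ ≤ b)
    (g : M → X) (hg : ∀ x y : M, ‖g x - g y‖ = dist x y)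
    (lam : ℝ) (hlam : 2 * b < lam) :
    ∃ C₁ C₂ : ℝ, 0 < C₁ ∧
      C₂ / C₁ ≤ (1 + 2 * b / lam) * (1 + 2 * b / (lam - 2 * b)) ∧
      ∀ x y : M,
        C₁ * (lam * dist x y) ≤ ‖π (lam • g x) - π (lam • g y)‖ ∧
        ‖π (lam • g x) - π (lam • g y)‖ ≤ C₂ * (lam * dist x y) := by
  have hlam0 : 0 < lam := by linarith [(norm_nonneg _).trans (hπ 0)]
  have hF : ∀ x y, |dist (π (lam • g x)) (π (lam • g y)) - lam * dist x y| ≤ 2 * b := by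
    intro x y
    have h := abs_dist_sub_dist_le_of_forall_dist_le (p := π)
      (fun u ↦ (dist_eq_norm u (π u)).trans_le (hπ u)) (lam • g x) (lam • g y)
    rwa [dist_smul₀, Real.norm_of_nonneg hlam0.le, dist_eq_norm (g x), hg] at h
  refine ⟨1 - 2 * b / lam, 1 + 2 * b / lam, sub_pos.2 ((div_lt_one hlam0).2 hlam),
    (one_add_div_div_one_sub_div hlam0 hlam).le, fun x y ↦ ?_⟩
  simpa only [dist_eq_norm] using dist_bounds_of_abs_dist_sub_mul_le hsep hlam0 hF x y

/-- given a 1-separated metric space `M`, an `(a,b)`-net `𝒩` in a Banach space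
`X` with a projection `π` onto `𝒩` moving points at most `b`, an isometric embedding
`g : M → X`, and `λ > 2b`, the map `x ↦ π(λ g(x))` from `(M, λ·d)` to `𝒩` is a Lipschitz
embedding with distortion at most `(1 + 2b/λ)(1 + 2b/(λ−2b))`. -/
theorem stmt15 (M : Type*) [MetricSpace M]
    (hsep : ∀ x y : M, x ≠ y → 1 ≤ dist x y)
    (X : Type*) [NormedAddCommGroup X] [NormedSpace ℝ X] [CompleteSpace X]
    (N : Set X) (a b : ℝ) (ha : 0 < a) (hb : 0 < b)
    (hNsep : ∀ x ∈ N, ∀ y ∈ N, x ≠ y → a ≤ ‖x - y‖)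
    (hNcov : ∀ x : X, ∃ y ∈ N, ‖x - y‖ ≤ b)
    (π : X → X) (hπN : ∀ x : X, π x ∈ N) (hπ : ∀ x : X, ‖x - π x‖ ≤ b)
    (g : M → X) (hg : ∀ x y : M, ‖g x - g y‖ = dist x y)
    (lam : ℝ) (hlam : 2 * b < lam) :
    ∃ C₁ C₂ : ℝ, 0 < C₁ ∧
      C₂ / C₁ ≤ (1 + 2 * b / lam) * (1 + 2 * b / (lam - 2 * b)) ∧
      ∀ x y : M,
        C₁ * (lam * dist x y) ≤ ‖π (lam • g x) - π (lam • g y)‖ ∧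
        ‖π (lam • g x) - π (lam • g y)‖ ≤ C₂ * (lam * dist x y) :=
  stmt15_general M hsep X b π hπ g hg lam hlam
end

section
/- Let X, Y be Banach spaces and u : X → Y a uniformly continuous map. Then the Lipschitz constant of u at infinity, l_∞(u) = inf_{η>0} sup{‖u(x) − u(x')‖/‖x − x'‖ : ‖x − x'‖ ≥ η}, is finite. -/
/-!
Corson–Klee. Uniform continuity gives `δ > 0` with `dist (u a) (u b) ≤ 1` whenever
`dist a b < δ`. Two points at distance `d` are joined by a segment, which splits into
`⌊d / δ⌋ + 1` pieces of length `< δ`; hence `dist (u x) (u y) ≤ d / δ + 1`, and this is at most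
`2 d / δ` once `d ≥ δ`.
-/

open AffineMap

theorem dist_le_mul_of_dist_lt_mul {V P β : Type*} [SeminormedAddCommGroup V] [NormedSpace ℝ V]
    [PseudoMetricSpace P] [NormedAddTorsor V P] [PseudoMetricSpace β] {g : P → β} {δ ε : ℝ}
    (hg : ∀ a b, dist a b < δ → dist (g a) (g b) ≤ ε) {x y : P} {n : ℕ}
    (hxy : dist x y < n * δ) : dist (g x) (g y) ≤ n * ε := by
  have hn : (0 : ℝ) < n := by
    rcases Nat.eq_zero_or_pos n with rfl | hn
    · simp only [Nat.cast_zero, zero_mul] at hxy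
      exact absurd hxy (dist_nonneg).not_gt
    · exact_mod_cast hn
  set p : ℕ → P := fun i ↦ lineMap x y ((i : ℝ) / n)
  have hp_step (i : ℕ) : dist (p i) (p (i + 1)) < δ := by
    have hdist : dist ((i : ℝ) / n) ((i + 1 : ℕ) / n) = 1 / n := by
      rw [Real.dist_eq, Nat.cast_succ, ← sub_div, sub_add_cancel_left, abs_div, abs_neg,
        abs_one, abs_of_pos hn]
    rw [dist_lineMap_lineMap, hdist, one_div, inv_mul_lt_iff₀ hn]
    exact hxy
  calc dist (g x) (g y) = dist (g (p 0)) (g (p n)) := by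
        simp only [p, Nat.cast_zero, zero_div, lineMap_apply_zero, div_self hn.ne',
          lineMap_apply_one]
    _ ≤ ∑ i ∈ Finset.range n, dist (g (p i)) (g (p (i + 1))) :=
        dist_le_range_sum_dist (fun i ↦ g (p i)) n
    _ ≤ ∑ _i ∈ Finset.range n, ε := Finset.sum_le_sum fun i _ ↦ hg _ _ (hp_step i)
    _ = n * ε := by rw [Finset.sum_const, Finset.card_range, nsmul_eq_mul]

theorem UniformContinuous.exists_pos_dist_le_div_add_one {V P β : Type*}
    [SeminormedAddCommGroup V] [NormedSpace ℝ V] [PseudoMetricSpace P] [NormedAddTorsor V P]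
    [PseudoMetricSpace β] {g : P → β} (hg : UniformContinuous g) :
    ∃ δ > 0, ∀ x y, dist (g x) (g y) ≤ dist x y / δ + 1 := by
  obtain ⟨δ, hδ, hg₁⟩ := Metric.uniformContinuous_iff.1 hg 1 one_pos
  refine ⟨δ, hδ, fun x y ↦ ?_⟩
  set n := ⌊dist x y / δ⌋₊ + 1
  have hxy : dist x y < n * δ := by
    rw [← div_lt_iff₀ hδ, Nat.cast_succ]
    exact Nat.lt_floor_add_one _
  have hn : (n : ℝ) ≤ dist x y / δ + 1 := by
    rw [Nat.cast_succ]
    gcongr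
    exact Nat.floor_le (by positivity)
  calc dist (g x) (g y) ≤ n * 1 := dist_le_mul_of_dist_lt_mul (fun a b h ↦ (hg₁ h).le) hxy
    _ ≤ dist x y / δ + 1 := by rwa [mul_one]

theorem stmt17_general (X : Type*) [NormedAddCommGroup X] [NormedSpace ℝ X]
    (Y : Type*) [NormedAddCommGroup Y]
    (u : X → Y) (hu : UniformContinuous u) :
    ∃ η > (0 : ℝ), ∃ L : ℝ, ∀ x x' : X, η ≤ ‖x - x'‖ → ‖u x - u x'‖ ≤ L * ‖x - x'‖ := by
  obtain ⟨δ, hδ, hu_bound⟩ := hu.exists_pos_dist_le_div_add_one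
  refine ⟨δ, hδ, 2 / δ, fun x x' hxx' ↦ ?_⟩
  have h_one : 1 ≤ ‖x - x'‖ / δ := (one_le_div hδ).2 hxx'
  calc ‖u x - u x'‖ ≤ ‖x - x'‖ / δ + 1 := by simpa only [dist_eq_norm] using hu_bound x x'
    _ ≤ 2 / δ * ‖x - x'‖ := by rw [div_mul_eq_mul_div, mul_div_assoc]; linarith

/-- Corson–Klee: a uniformly continuous map `u : X → Y` between Banach spaces
is Lipschitz for large distances: its Lipschitz constant at infinity
`l_∞(u) = inf_{η>0} sup {‖u x − u x'‖ / ‖x − x'‖ : ‖x − x'‖ ≥ η}` is finite, i.e. for some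
`η > 0` there is `L` with `‖u x − u x'‖ ≤ L ‖x − x'‖` whenever `‖x − x'‖ ≥ η`. -/
theorem stmt17 (X : Type*) [NormedAddCommGroup X] [NormedSpace ℝ X] [CompleteSpace X]
    (Y : Type*) [NormedAddCommGroup Y] [NormedSpace ℝ Y] [CompleteSpace Y]
    (u : X → Y) (hu : UniformContinuous u) :
    ∃ η > (0 : ℝ), ∃ L : ℝ, ∀ x x' : X, η ≤ ‖x - x'‖ → ‖u x - u x'‖ ≤ L * ‖x - x'‖ :=
  stmt17_general X Y u hu
end

section
/- Let C₁,…,C_h be pairwise disjoint finite sets with C₁ = {1,2}, let M = M(C₁,…,C_h) be the associated 3-level metric graph with shortest path metric, let K be a compact Hausdorff space, 1 ≤ D < 2, and let f : M → C(K) satisfy d(x,y) ≤ ‖f(x) − f(y)‖ ≤ D d(x,y). Then for every choice of aᵢ ≠ bᵢ in Cᵢ (1 ≤ i ≤ h), the intersection ⋂_{i=1}^h X^f_{aᵢ,bᵢ} is nonempty, where X^f_{a,b} = {t ∈ K : |f(a)(t) − f(b)(t)| ≥ 4 − 2D}. -/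
/- The 3-level graph M(C₁,…,C_h): vertex `base` = ⋆, vertices `mid i c` = points of the
pairwise disjoint sets Cᵢ (modelled as distinct types `C i`), vertices `top f` = elements
of F = {{c₁,…,c_h} : cᵢ ∈ Cᵢ} (a set in F is identified with the choice function f). -/
inductive ThreeLevelVertex (h : ℕ) (C : Fin h → Type*) where
  | base : ThreeLevelVertex h C
  | mid (i : Fin h) (c : C i) : ThreeLevelVertex h C
  | top (f : ∀ i, C i) : ThreeLevelVertex h C

/-- Adjacency: ⋆ is joined to every second-level point, and a second-level point `c ∈ Cᵢ`
is joined to a third-level point `f ∈ F` iff `c ∈ f`, i.e. `f i = c`. -/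
def threeLevelAdj {h : ℕ} {C : Fin h → Type*} :
    ThreeLevelVertex h C → ThreeLevelVertex h C → Prop
  | .base, .mid _ _ => True
  | .mid _ _, .base => True
  | .mid i c, .top f => f i = c
  | .top f, .mid i c => f i = c
  | _, _ => False

def threeLevelGraph (h : ℕ) (C : Fin h → Type*) : SimpleGraph (ThreeLevelVertex h C) where
  Adj := threeLevelAdj
  symm := ⟨by intro a b hab; cases a <;> cases b <;> simp_all [threeLevelAdj]⟩
  loopless := ⟨by intro a hab; cases a <;> simp_all [threeLevelAdj]⟩

/-! The tops `A = top a` and `B = top b` have no common neighbour and no edge between their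
neighbourhoods, so `d(A, B) ≥ 4` and `‖f A - f B‖ ≥ 4`. At a point `t` where `|f A - f B|`
attains its maximum, the triangle inequality along `A, aᵢ, bᵢ, B`, with `‖f A - f aᵢ‖ ≤ D`
and `‖f bᵢ - f B‖ ≤ D`, leaves `|f aᵢ t - f bᵢ t| ≥ 4 - 2D` for every `i` at once. -/

namespace SimpleGraph

variable {V : Type*} {G : SimpleGraph V} {u v : V}

lemma Walk.four_le_length (w : G.Walk u v) (hne : u ≠ v) (hadj : ¬G.Adj u v)
    (hcommon : ∀ x, G.Adj u x → ¬G.Adj x v)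
    (hpath3 : ∀ x y, G.Adj u x → G.Adj x y → ¬G.Adj y v) : 4 ≤ w.length := by
  match w with
  | .nil => exact absurd rfl hne
  | .cons h₁ .nil => exact absurd h₁ hadj
  | .cons h₁ (.cons h₂ .nil) => exact absurd h₂ (hcommon _ h₁)
  | .cons h₁ (.cons h₂ (.cons h₃ .nil)) => exact absurd h₃ (hpath3 _ _ h₁ h₂)
  | .cons _ (.cons _ (.cons _ (.cons _ _))) => simp only [Walk.length_cons]; omega

lemma Reachable.four_le_dist (hr : G.Reachable u v) (hne : u ≠ v) (hadj : ¬G.Adj u v)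
    (hcommon : ∀ x, G.Adj u x → ¬G.Adj x v)
    (hpath3 : ∀ x y, G.Adj u x → G.Adj x y → ¬G.Adj y v) : 4 ≤ G.dist u v := by
  obtain ⟨w, hw⟩ := hr.exists_walk_length_eq_dist
  exact hw ▸ w.four_le_length hne hadj hcommon hpath3

end SimpleGraph

namespace ThreeLevelVertex

variable {h : ℕ} {C : Fin h → Type*}

lemma reachable_top_top (i : Fin h) (a b : ∀ i, C i) :
    (threeLevelGraph h C).Reachable (top a) (top b) :=
  ⟨.cons (v := mid i (a i)) rfl <| .cons (v := base) trivial <|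
    .cons (v := mid i (b i)) trivial <|
    .cons (show (threeLevelGraph h C).Adj (mid i (b i)) (top b) from rfl) .nil⟩

lemma four_le_dist_top_top (hh : 0 < h) {a b : ∀ i, C i} (hab : ∀ i, a i ≠ b i) :
    4 ≤ (threeLevelGraph h C).dist (top a) (top b) := by
  refine (reachable_top_top ⟨0, hh⟩ a b).four_le_dist ?_ (fun hadj ↦ hadj.elim) ?_ ?_
  · exact fun heq ↦ hab ⟨0, hh⟩ (by rw [top.inj heq])
  · rintro (_ | ⟨i, c⟩ | _) hx hxb <;> cases hx
    exact hab i (show b i = a i from hxb).symm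
  · rintro (_ | ⟨i, c⟩ | _) (_ | ⟨j, d⟩ | _) hx hxy hyb <;>
      first | exact False.elim hx | exact False.elim hxy | exact False.elim hyb

end ThreeLevelVertex

namespace ContinuousMap

variable {K β : Type*} [TopologicalSpace K] [CompactSpace K] [PseudoMetricSpace β]

lemma exists_dist_apply_eq_dist {f g : C(K, β)} (hfg : 0 < dist f g) :
    ∃ t, dist (f t) (g t) = dist f g := by
  have : Nonempty K := by
    by_contra hK
    rw [not_nonempty_iff] at hK
    simp [Subsingleton.elim f g] at hfg
  obtain ⟨t, -, ht⟩ :=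
    isCompact_univ.exists_isMaxOn Set.univ_nonempty (f.continuous.dist g.continuous).continuousOn
  exact ⟨t, le_antisymm (dist_apply_le_dist t)
    (dist_le_iff_of_nonempty.2 fun s ↦ ht (Set.mem_univ s))⟩

end ContinuousMap

open ThreeLevelVertex

theorem stmt19_general (h : ℕ) (hh : 0 < h) (C : Fin h → Type*)
    (K : Type*) [TopologicalSpace K] [CompactSpace K]
    (D : ℝ)
    (f : ThreeLevelVertex h C → C(K, ℝ))
    (hf : ∀ x y : ThreeLevelVertex h C,
      ((threeLevelGraph h C).dist x y : ℝ) ≤ ‖f x - f y‖ ∧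
      ‖f x - f y‖ ≤ D * ((threeLevelGraph h C).dist x y : ℝ))
    (a b : ∀ i, C i) (hab : ∀ i, a i ≠ b i) :
    ∃ t : K, ∀ i : Fin h,
      4 - 2 * D ≤ |f (.mid i (a i)) t - f (.mid i (b i)) t| := by
  have htops : 4 ≤ dist (f (top a)) (f (top b)) := by
    rw [dist_eq_norm]
    exact le_trans (by exact_mod_cast four_le_dist_top_top hh hab) (hf _ _).1
  have hedge : ∀ x y, (threeLevelGraph h C).Adj x y → dist (f x) (f y) ≤ D := fun x y hxy ↦ by
    simpa [dist_eq_norm, SimpleGraph.dist_eq_one_iff_adj.2 hxy] using (hf x y).2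
  obtain ⟨t, ht⟩ := ContinuousMap.exists_dist_apply_eq_dist (by linarith : 0 < dist _ _)
  refine ⟨t, fun i ↦ ?_⟩
  have htri := dist_triangle4 (f (top a) t) (f (mid i (a i)) t) (f (mid i (b i)) t) (f (top b) t)
  have ha := (ContinuousMap.dist_apply_le_dist t).trans (hedge (top a) (mid i (a i)) rfl)
  have hb := (ContinuousMap.dist_apply_le_dist t).trans (hedge (mid i (b i)) (top b) rfl)
  rw [← Real.dist_eq]
  linarith

/-- for any embedding `f` of `M(C₁,…,C_h)` (with `C₁ = {1,2}`) into `C(K)` with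
`d(x,y) ≤ ‖f x − f y‖ ≤ D d(x,y)`, `1 ≤ D < 2`, and any choices `aᵢ ≠ bᵢ` in `Cᵢ`, the sets
`X^f_{aᵢ,bᵢ} = {t : |f(aᵢ)(t) − f(bᵢ)(t)| ≥ 4 − 2D}` have a common point. -/
theorem stmt19 (h : ℕ) (hh : 0 < h) (C : Fin h → Type*) [∀ i, Fintype (C i)]
    [∀ i, Nonempty (C i)]
    (one two : C ⟨0, hh⟩) (h12 : one ≠ two) (hC0 : ∀ c : C ⟨0, hh⟩, c = one ∨ c = two)
    (K : Type*) [TopologicalSpace K] [CompactSpace K] [T2Space K]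
    (D : ℝ) (hD1 : 1 ≤ D) (hD2 : D < 2)
    (f : ThreeLevelVertex h C → C(K, ℝ))
    (hf : ∀ x y : ThreeLevelVertex h C,
      ((threeLevelGraph h C).dist x y : ℝ) ≤ ‖f x - f y‖ ∧
      ‖f x - f y‖ ≤ D * ((threeLevelGraph h C).dist x y : ℝ))
    (a b : ∀ i, C i) (hab : ∀ i, a i ≠ b i) :
    ∃ t : K, ∀ i : Fin h,
      4 - 2 * D ≤ |f (.mid i (a i)) t - f (.mid i (b i)) t| :=
  stmt19_general h hh C K D f hf a b hab
end
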